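/- Commutation of head reductions (multi-step): if M head-σ-reduces in several steps to L and L head-β_v-reduces in several steps to N, then there exists L' such that M head-β_v-reduces (in several steps) to L' and L' head-σ-reduces (in several steps) to N. -/

import Mathlib

/-- Terms of the call-by-value λ-calculus, in de Bruijn notation. -/
inductive Term : Type
  | var : ℕ → Term
  | lam : Term → Term
  | app : Term → Term → Term

namespace Term

/-- Values are variables and abstractions. -/
def isValue : Term → Prop
  | var _ => True
  | lam _ => True
  | app _ _ => False

/-- Shift free de Bruijn indices ≥ d by one. -/
def lift (d : ℕ) : Term → Term
  | var n => if n < d then var n else var (n+1)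
  | lam M => lam (lift (d+1) M)
  | app M N => app (lift d M) (lift d N)

/-- Capture-avoiding substitution of `V` for index `k`. -/
def subst : Term → ℕ → Term → Term
  | var n, k, V => if n = k then V else if k < n then var (n-1) else var n
  | lam M, k, V => lam (subst M (k+1) (lift 0 V))
  | app M N, k, V => app (subst M k V) (subst N k V)

/-- Apply a term to a list of arguments: `appList M [M₁,…,Mₘ] = M M₁ … Mₘ`. -/
def appList : Term → List Term → Term
  | M, [] => M
  | M, N :: Ns => appList (app M N) Ns

/-- Root σ-reduction rules σ₁ and σ₃ (freshness handled by lifting). -/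
inductive SigmaBase : Term → Term → Prop
  | sigma1 (M N L : Term) :
      SigmaBase (app (app (lam M) N) L) (app (lam (app M (lift 0 L))) N)
  | sigma3 (V L N : Term) : isValue V →
      SigmaBase (app V (app (lam L) N)) (app (lam (app (lift 0 V) L)) N)

/-- Root rules of v-reduction: β_v, σ₁ and σ₃. -/
inductive VBase : Term → Term → Prop
  | beta (M V : Term) : isValue V → VBase (app (lam M) V) (subst M 0 V)
  | sigma1 (M N L : Term) :
      VBase (app (app (lam M) N) L) (app (lam (app M (lift 0 L))) N)
  | sigma3 (V L N : Term) : isValue V →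
      VBase (app V (app (lam L) N)) (app (lam (app (lift 0 V) L)) N)

/-- Contextual closure of a root relation. -/
inductive Ctx (r : Term → Term → Prop) : Term → Term → Prop
  | base {M M'} : r M M' → Ctx r M M'
  | lam {M M'} : Ctx r M M' → Ctx r (lam M) (lam M')
  | appL {M M'} (N : Term) : Ctx r M M' → Ctx r (app M N) (app M' N)
  | appR (M : Term) {N N'} : Ctx r N N' → Ctx r (app M N) (app M N')

/-- σ-reduction: contextual closure of σ₁ ∪ σ₃. -/
def SigmaRed : Term → Term → Prop := Ctx SigmaBase

/-- v-reduction: contextual closure of β_v ∪ σ₁ ∪ σ₃. -/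
def Red : Term → Term → Prop := Ctx VBase

/-- Head β_v-reduction. -/
inductive HeadBeta : Term → Term → Prop
  | beta (M V : Term) (Ms : List Term) : isValue V →
      HeadBeta (appList (app (lam M) V) Ms) (appList (subst M 0 V) Ms)
  | right (V : Term) {N N'} (Ms : List Term) : isValue V → HeadBeta N N' →
      HeadBeta (appList (app V N) Ms) (appList (app V N') Ms)

/-- Head σ-reduction. -/
inductive HeadSigma : Term → Term → Prop
  | sigma1 (M N L : Term) (Ms : List Term) :
      HeadSigma (appList (app (app (lam M) N) L) Ms)
                (appList (app (lam (app M (lift 0 L))) N) Ms)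
  | sigma3 (V L N : Term) (Ms : List Term) : isValue V →
      HeadSigma (appList (app V (app (lam L) N)) Ms)
                (appList (app (lam (app (lift 0 V) L)) N) Ms)
  | right (V : Term) {N N'} (Ms : List Term) : isValue V → HeadSigma N N' →
      HeadSigma (appList (app V N) Ms) (appList (app V N') Ms)

/-- Head v-reduction: head β_v ∪ head σ. -/
def HeadRed (M N : Term) : Prop := HeadBeta M N ∨ HeadSigma M N

/-- Internal v-reduction: v-steps that are not head v-steps. -/
def IntRed (M N : Term) : Prop := Red M N ∧ ¬ HeadRed M N

/-- Parallel reduction of the shuffling calculus λ_v^σ. -/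
inductive Par : Term → Term → Prop
  | var (x : ℕ) {Ms Ms' : List Term} : List.Forall₂ Par Ms Ms' →
      Par (appList (var x) Ms) (appList (var x) Ms')
  | lam {M M'} {Ms Ms' : List Term} : Par M M' → List.Forall₂ Par Ms Ms' →
      Par (appList (lam M) Ms) (appList (lam M') Ms')
  | beta {M M' V V'} {Ms Ms' : List Term} : isValue V → isValue V' →
      Par M M' → Par V V' → List.Forall₂ Par Ms Ms' →
      Par (appList (app (lam M) V) Ms) (appList (subst M' 0 V') Ms')
  | sigma1 {M M' N N' L L'} {Ms Ms' : List Term} :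
      Par M M' → Par N N' → Par L L' → List.Forall₂ Par Ms Ms' →
      Par (appList (app (app (lam M) N) L) Ms)
          (appList (app (lam (app M' (lift 0 L'))) N') Ms')
  | sigma3 {V V' L L' N N'} {Ms Ms' : List Term} : isValue V → isValue V' →
      Par V V' → Par L L' → Par N N' → List.Forall₂ Par Ms Ms' →
      Par (appList (app V (app (lam L) N)) Ms)
          (appList (app (lam (app (lift 0 V') L')) N') Ms')

/-- Internal parallel reduction. -/
inductive IPar : Term → Term → Prop
  | lam {N N'} : Par N N' → IPar (lam N) (lam N')
  | var (x : ℕ) : IPar (var x) (var x)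
  | right {V V' N N'} {Ms Ms' : List Term} : isValue V → isValue V' →
      Par V V' → IPar N N' → List.Forall₂ Par Ms Ms' →
      IPar (appList (app V N) Ms) (appList (app V' N') Ms')

/-- One-hole contexts. -/
inductive Ctx1 : Type
  | hole : Ctx1
  | lam : Ctx1 → Ctx1
  | appL : Ctx1 → Term → Ctx1
  | appR : Term → Ctx1 → Ctx1

/-- Capture-allowing hole filling. -/
def fill : Ctx1 → Term → Term
  | .hole, M => M
  | .lam C, M => lam (fill C M)
  | .appL C N, M => app (fill C M) N
  | .appR N C, M => app N (fill C M)

/-- `M` halts: head β_v-reduction from `M` reaches a value. -/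
def Halts (M : Term) : Prop := ∃ V, isValue V ∧ Relation.ReflTransGen HeadBeta M V

end Term

/-! Head reduction fires its redex in an evaluation context `E ::= [] | E N | V E`. A σ-step
never creates or destroys the β_v-redex in such a position, it only moves arguments past a
λ-abstraction: so a σ-step followed by a head β_v-step can be replaced by one head β_v-step
followed by at most one σ-step. Since the β_v-step is kept single, the usual diagram chase
over the two reflexive-transitive closures terminates without any measure. -/

namespace Relation

variable {α : Type*} {r s : α → α → Prop}

theorem ReflTransGen.commute_of_single
    (h : ∀ a b c, s a b → r b c → ∃ d, r a d ∧ ReflTransGen s d c) {a b c : α}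
    (hab : ReflTransGen s a b) (hbc : ReflTransGen r b c) :
    ∃ d, ReflTransGen r a d ∧ ReflTransGen s d c := by
  have single_r : ∀ {a b c}, ReflTransGen s a b → r b c → ∃ d, r a d ∧ ReflTransGen s d c := by
    intro a b c hab hbc
    induction hab using ReflTransGen.head_induction_on with
    | refl => exact ⟨c, hbc, .refl⟩
    | head hs _ ih =>
      obtain ⟨d, hr, hs'⟩ := ih
      obtain ⟨e, hr', hs''⟩ := h _ _ _ hs hr
      exact ⟨e, hr', hs''.trans hs'⟩
  induction hbc using ReflTransGen.head_induction_on generalizing a with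
  | refl => exact ⟨a, .refl, hab⟩
  | head hr _ ih =>
    obtain ⟨d, hr', hs⟩ := single_r hab hr
    obtain ⟨e, hr'', hs'⟩ := ih hs
    exact ⟨e, hr''.head hr', hs'⟩

end Relation

namespace Term

open Relation

inductive BetaBase : Term → Term → Prop
  | beta (M V : Term) : isValue V → BetaBase (app (lam M) V) (subst M 0 V)

inductive EvalCtx (r : Term → Term → Prop) : Term → Term → Prop
  | base {M M'} : r M M' → EvalCtx r M M'
  | appL {M M'} (N : Term) : EvalCtx r M M' → EvalCtx r (app M N) (app M' N)
  | appR {V N N'} : isValue V → EvalCtx r N N' → EvalCtx r (app V N) (app V N')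

theorem appList_append (M : Term) (Ms Ns : List Term) :
    appList M (Ms ++ Ns) = appList (appList M Ms) Ns := by
  induction Ms generalizing M with
  | nil => rfl
  | cons L Ms ih => exact ih (app M L)

theorem appList_concat (M N : Term) (Ms : List Term) :
    appList M (Ms ++ [N]) = app (appList M Ms) N :=
  appList_append M Ms [N]

theorem EvalCtx.appList {r : Term → Term → Prop} {M M' : Term} (h : EvalCtx r M M')
    (Ms : List Term) : EvalCtx r (appList M Ms) (appList M' Ms) := by
  induction Ms generalizing M M' with
  | nil => exact h
  | cons N Ms ih => exact ih (h.appL N)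

theorem HeadBeta.appL {M M' : Term} (N : Term) (h : HeadBeta M M') :
    HeadBeta (app M N) (app M' N) := by
  cases h with
  | beta A V Ms hV => simpa only [appList_concat] using HeadBeta.beta A V (Ms ++ [N]) hV
  | right V Ms hV hN => simpa only [appList_concat] using HeadBeta.right V (Ms ++ [N]) hV hN

theorem HeadSigma.appL {M M' : Term} (N : Term) (h : HeadSigma M M') :
    HeadSigma (app M N) (app M' N) := by
  cases h with
  | sigma1 A B C Ms => simpa only [appList_concat] using HeadSigma.sigma1 A B C (Ms ++ [N])
  | sigma3 V A B Ms hV => simpa only [appList_concat] using HeadSigma.sigma3 V A B (Ms ++ [N]) hV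
  | right V Ms hV hN => simpa only [appList_concat] using HeadSigma.right V (Ms ++ [N]) hV hN

theorem headBeta_eq_evalCtx : HeadBeta = EvalCtx BetaBase := by
  ext M N
  constructor
  · intro h
    induction h with
    | beta A V Ms hV => exact (EvalCtx.base (BetaBase.beta A V hV)).appList Ms
    | right V Ms hV _ ih => exact (EvalCtx.appR hV ih).appList Ms
  · intro h
    induction h with
    | base h => obtain ⟨A, V, hV⟩ := h; exact HeadBeta.beta A V [] hV
    | appL N _ ih => exact ih.appL N
    | appR hV _ ih => exact HeadBeta.right _ [] hV ih

theorem headSigma_eq_evalCtx : HeadSigma = EvalCtx SigmaBase := by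
  ext M N
  constructor
  · intro h
    induction h with
    | sigma1 A B C Ms => exact (EvalCtx.base (SigmaBase.sigma1 A B C)).appList Ms
    | sigma3 V A B Ms hV => exact (EvalCtx.base (SigmaBase.sigma3 V A B hV)).appList Ms
    | right V Ms hV _ ih => exact (EvalCtx.appR hV ih).appList Ms
  · intro h
    induction h with
    | base h =>
      cases h with
      | sigma1 A B C => exact HeadSigma.sigma1 A B C []
      | sigma3 V A B hV => exact HeadSigma.sigma3 V A B [] hV
    | appL N _ ih => exact ih.appL N
    | appR hV _ ih => exact HeadSigma.right _ [] hV ih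

theorem subst_lift (M : Term) (k : ℕ) (W : Term) : subst (lift k M) k W = M := by
  induction M generalizing k W with
  | var n =>
    rcases Nat.lt_or_ge n k with h | h
    · simp [lift, subst, h, Nat.ne_of_lt h, Nat.not_lt_of_gt h]
    · simp [lift, subst, Nat.not_lt_of_ge h, Nat.ne_of_gt (Nat.lt_succ_of_le h),
        Nat.lt_succ_of_le h]
  | lam M ih => simp [lift, subst, ih]
  | app M N ihM ihN => simp [lift, subst, ihM, ihN]

theorem not_isValue_of_evalCtx_betaBase {M M' : Term} (h : EvalCtx BetaBase M M') :
    ¬ isValue M := by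
  cases h with
  | base h => cases h; exact id
  | appL => exact id
  | appR => exact id

theorem not_isValue_of_evalCtx_sigmaBase {M M' : Term} (h : EvalCtx SigmaBase M M') :
    ¬ isValue M' := by
  cases h with
  | base h => cases h <;> exact id
  | appL => exact id
  | appR => exact id

theorem EvalCtx.reflTransGen_appL {r : Term → Term → Prop} {M M' : Term} (N : Term)
    (h : ReflTransGen (EvalCtx r) M M') : ReflTransGen (EvalCtx r) (app M N) (app M' N) :=
  h.lift (app · N) fun _ _ => EvalCtx.appL N

theorem EvalCtx.reflTransGen_appR {r : Term → Term → Prop} {V N N' : Term} (hV : isValue V)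
    (h : ReflTransGen (EvalCtx r) N N') : ReflTransGen (EvalCtx r) (app V N) (app V N') :=
  h.lift (app V) fun _ _ => EvalCtx.appR hV

theorem EvalCtx.sigma_beta_commute {M L N : Term} (hσ : EvalCtx SigmaBase M L)
    (hβ : EvalCtx BetaBase L N) :
    ∃ L', EvalCtx BetaBase M L' ∧ ReflTransGen (EvalCtx SigmaBase) L' N := by
  induction hσ generalizing N with
  | base h =>
    cases h with
    | sigma1 A B C =>
      cases hβ with
      | base h =>
        obtain ⟨_, _, hB⟩ := h
        -- before the σ₁-step, the β_v-redex `(λ.A (lift C)) B` already sits in `((λ.A) B) C`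
        refine ⟨app (subst A 0 B) C, .appL C (.base (.beta A B hB)), ?_⟩
        rw [subst, subst_lift]
      | appL _ h => exact (not_isValue_of_evalCtx_betaBase h trivial).elim
      | appR _ hB => exact ⟨_, .appL C (.appR trivial hB), .single (.base (.sigma1 A _ C))⟩
    | sigma3 V A B hV =>
      cases hβ with
      | base h =>
        obtain ⟨_, _, hB⟩ := h
        refine ⟨app V (subst A 0 B), .appR hV (.base (.beta A B hB)), ?_⟩
        rw [subst, subst_lift]
      | appL _ h => exact (not_isValue_of_evalCtx_betaBase h trivial).elim
      | appR _ hB => exact ⟨_, .appR hV (.appR trivial hB), .single (.base (.sigma3 V A _ hV))⟩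
  | appL Q hP ih =>
    cases hβ with
    | base h =>
      obtain ⟨_, _, _⟩ := h
      exact absurd trivial (not_isValue_of_evalCtx_sigmaBase hP)
    | appL _ hβ =>
      obtain ⟨L', hβ', hσ'⟩ := ih hβ
      exact ⟨app L' Q, hβ'.appL Q, EvalCtx.reflTransGen_appL Q hσ'⟩
    | appR hV _ => exact absurd hV (not_isValue_of_evalCtx_sigmaBase hP)
  | appR hV hP ih =>
    cases hβ with
    | base h =>
      obtain ⟨_, _, hV'⟩ := h
      exact absurd hV' (not_isValue_of_evalCtx_sigmaBase hP)
    | appL _ hβ => exact absurd hV (not_isValue_of_evalCtx_betaBase hβ)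
    | appR _ hβ =>
      obtain ⟨L', hβ', hσ'⟩ := ih hβ
      exact ⟨app _ L', .appR hV hβ', EvalCtx.reflTransGen_appR hV hσ'⟩

end Term

open Term Relation in
theorem head_commute_multi {M L N : Term}
    (h1 : ReflTransGen HeadSigma M L) (h2 : ReflTransGen HeadBeta L N) :
    ∃ L2, ReflTransGen HeadBeta M L2 ∧ ReflTransGen HeadSigma L2 N := by
  rw [headSigma_eq_evalCtx, headBeta_eq_evalCtx] at *
  exact h1.commute_of_single (fun _ _ _ => EvalCtx.sigma_beta_commute) h2
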